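/- arXiv:2512.04190 — 2 statements merged into one kernel-verified Lean document; each statement's English description precedes it below -/
import Mathlib

section
/- Consider the one-parameter family of coefficient vectors (0,1,c,0). Over the field ℚ(t) of rational functions in one variable t, the matrix of consequences M(0,1,t,0) has rank exactly 31; moreover, over ℚ, the matrix M(0,1,0,0) has rank exactly 26. -/
/-- First components `p_i` (1-indexed columns) of the 42 quadruples. -/
def colP : Fin 42 → ℕ :=
  ![4,8,11,13,14,1,4,8,11,13,14,1,4,8,11,13,14,1,5,9,12,15,16,2,17,24,26,27,28,7,19,29,34,36,37,10,2,7,10,3,23,33]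

/-- Second components `q_i`. -/
def colQ : Fin 42 → ℕ :=
  ![5,9,12,15,16,2,6,18,20,21,22,4,6,18,20,21,22,4,6,18,20,21,22,4,18,25,30,31,32,8,20,30,35,38,39,11,3,17,19,5,24,34]

/-- Third components `r_i`. -/
def colR : Fin 42 → ℕ :=
  ![21,31,38,40,41,13,17,24,26,27,28,7,18,25,30,31,32,8,18,25,30,31,32,8,20,30,35,38,39,11,21,31,38,40,41,13,15,23,29,9,26,36]

/-- Fourth components `s_i`. -/
def colS : Fin 42 → ℕ :=
  ![22,32,39,41,42,14,22,32,39,41,42,14,19,29,34,36,37,10,20,30,35,38,39,11,21,31,38,40,41,13,22,32,39,41,42,14,16,28,33,12,27,37]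

/-- The 42×42 matrix of consequences `M(a,b,c,d)` over a field `K`:
row `i` has entry `a` in column `p_i`, `b` in column `q_i`, `c` in column `r_i`,
`d` in column `s_i` (columns counted 1-based), and `0` elsewhere. -/
def consMatrix (K : Type*) [Field K] (a b c d : K) : Matrix (Fin 42) (Fin 42) K :=
  fun i j =>
    (if (j : ℕ) + 1 = colP i then a else 0) +
    (if (j : ℕ) + 1 = colQ i then b else 0) +
    (if (j : ℕ) + 1 = colR i then c else 0) +
    (if (j : ℕ) + 1 = colS i then d else 0)

/-!
Row `i` of `M(0,1,c,0)` is `e_{q_i} + c • e_{r_i}`. For `c = 0` the rows are standard basis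
vectors, so the rank is the number of distinct `q_i`, namely 26. For general `c`, read row `i`
as an edge `q_i — r_i` of a graph on the 42 columns: it has 11 components, and on each one can
choose depths with `depth q_i = depth r_i + 1` along every edge, so that `j ↦ (-c) ^ depth j`
on a component (and `0` elsewhere) lies in the kernel; hence the rank is at most 31. When
`c ≠ 0` a 31 × 31 submatrix is upper triangular with diagonal entries `1` or `c`, so the rank
is exactly 31, in particular for `c = t` in `ℚ(t)`.
-/

open Matrix Module

section RankBounds

variable {K m n : Type*} [Field K] [Fintype n]

theorem Matrix.le_rank_of_isUpperTriangular_submatrix {N : ℕ} (M : Matrix m n K)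
    (f : Fin N → m) (g : Fin N → n) (htri : (M.submatrix f g).IsUpperTriangular)
    (hdiag : ∀ i, M (f i) (g i) ≠ 0) : N ≤ M.rank := by
  have hdet : IsUnit (M.submatrix f g).det := by
    rw [det_of_isUpperTriangular htri]
    exact (Finset.prod_ne_zero_iff.mpr fun i _ => hdiag i).isUnit
  calc N = (M.submatrix f g).rank := by
        rw [rank_of_isUnit _ ((isUnit_iff_isUnit_det _).mpr hdet), Fintype.card_fin]
    _ ≤ M.rank := rank_submatrix_le M f g

theorem Matrix.rank_add_card_le_of_mulVec_eq_zero {ι : Type*} [Fintype ι] (M : Matrix m n K)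
    {v : ι → n → K} (hv : LinearIndependent K v) (hker : ∀ k, M *ᵥ v k = 0) :
    M.rank + Fintype.card ι ≤ Fintype.card n := by
  have hspan : Submodule.span K (Set.range v) ≤ LinearMap.ker M.mulVecLin :=
    Submodule.span_le.mpr (Set.range_subset_iff.mpr hker)
  have hcard : Fintype.card ι ≤ finrank K (LinearMap.ker M.mulVecLin) :=
    finrank_span_eq_card hv ▸ Submodule.finrank_mono hspan
  have hsum := LinearMap.finrank_range_add_finrank_ker M.mulVecLin
  rw [finrank_fintype_fun_eq_card] at hsum
  unfold Matrix.rank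
  omega

theorem Matrix.rank_one_submatrix [Fintype m] [DecidableEq n] (f : m → n) :
    ((1 : Matrix n n K).submatrix f id).rank = (Finset.univ.image f).card := by
  set S := Finset.univ.image f
  have hli : LinearIndependent K (Pi.basisFun K n ∘ ((↑) : S → n)) :=
    (Pi.basisFun K n).linearIndependent.comp _ Subtype.val_injective
  have hrow : ((1 : Matrix n n K).submatrix f id).row = fun i => Pi.basisFun K n (f i) := by
    ext i j
    rw [row_apply, submatrix_apply, one_eq_pi_single, Pi.basisFun_apply, id]
  have hrange : Set.range ((1 : Matrix n n K).submatrix f id).row =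
      Set.range (Pi.basisFun K n ∘ ((↑) : S → n)) := by
    ext x
    simp [S, hrow]
  rw [rank_eq_finrank_span_row, hrange, finrank_span_eq_card hli, Fintype.card_coe]

end RankBounds

lemma colQ_mem_Icc : ∀ i, colQ i ∈ Finset.Icc 1 42 := by decide
lemma colR_mem_Icc : ∀ i, colR i ∈ Finset.Icc 1 42 := by decide

def colQFin (i : Fin 42) : Fin 42 :=
  ⟨colQ i - 1, by have := Finset.mem_Icc.mp (colQ_mem_Icc i); omega⟩

def colRFin (i : Fin 42) : Fin 42 :=
  ⟨colR i - 1, by have := Finset.mem_Icc.mp (colR_mem_Icc i); omega⟩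

section ConsMatrix

variable {K : Type*} [Field K]

lemma consMatrix_zero_one_apply (c : K) (i j : Fin 42) :
    consMatrix K 0 1 c 0 i j
      = (if j = colQFin i then 1 else 0) + c * (if j = colRFin i then 1 else 0) := by
  have hq := Finset.mem_Icc.mp (colQ_mem_Icc i)
  have hr := Finset.mem_Icc.mp (colR_mem_Icc i)
  have hjq : (j : ℕ) + 1 = colQ i ↔ j = colQFin i := by
    simp only [Fin.ext_iff, colQFin]; omega
  have hjr : (j : ℕ) + 1 = colR i ↔ j = colRFin i := by
    simp only [Fin.ext_iff, colRFin]; omega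
  simp only [consMatrix, hjq, hjr, ite_self, zero_add, add_zero, mul_ite, mul_one, mul_zero]

lemma consMatrix_zero_one_mulVec (c : K) (v : Fin 42 → K) (i : Fin 42) :
    (consMatrix K 0 1 c 0 *ᵥ v) i = v (colQFin i) + c * v (colRFin i) := by
  simp only [mulVec, dotProduct, consMatrix_zero_one_apply, add_mul, ite_mul, one_mul, zero_mul,
    mul_assoc, Finset.sum_add_distrib, ← Finset.mul_sum, Finset.sum_ite_eq', Finset.mem_univ,
    if_true]

lemma consMatrix_zero_one_zero_eq :
    consMatrix K 0 1 0 0 = (1 : Matrix (Fin 42) (Fin 42) K).submatrix colQFin id := by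
  ext i j
  simp only [consMatrix_zero_one_apply, zero_mul, add_zero, submatrix_apply, id, one_apply, eq_comm]

theorem rank_consMatrix_zero_one_zero : (consMatrix K 0 1 0 0).rank = 26 := by
  rw [consMatrix_zero_one_zero_eq, rank_one_submatrix]
  decide

def consComponent : Fin 42 → Fin 11 :=
  ![0,1,2,1,2,2,1,1,2,3,1,2,1,4,2,5,2,2,6,2,2,5,2,2,2,2,2,5,6,2,2,5,7,8,2,8,9,2,5,2,5,10]

def consDepth : Fin 42 → ℕ :=
  ![0,1,2,3,4,6,2,2,3,0,1,2,0,0,1,1,5,5,1,4,3,3,4,4,4,3,2,2,0,3,2,2,0,1,2,0,0,1,1,0,0,0]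

def consRoot : Fin 11 → Fin 42 := ![0,12,39,9,13,40,28,32,35,36,41]

lemma consComponent_colQFin : ∀ i, consComponent (colQFin i) = consComponent (colRFin i) ∧
    consDepth (colQFin i) = consDepth (colRFin i) + 1 := by
  decide

lemma consComponent_consRoot :
    ∀ k, consComponent (consRoot k) = k ∧ consDepth (consRoot k) = 0 := by
  decide

def consKerVec (c : K) (k : Fin 11) (j : Fin 42) : K :=
  if consComponent j = k then (-c) ^ consDepth j else 0

lemma consMatrix_zero_one_mulVec_consKerVec (c : K) (k : Fin 11) :
    consMatrix K 0 1 c 0 *ᵥ consKerVec c k = 0 := by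
  funext i
  obtain ⟨hcomp, hdepth⟩ := consComponent_colQFin i
  rw [consMatrix_zero_one_mulVec, consKerVec, consKerVec, hcomp, hdepth, Pi.zero_apply]
  split_ifs <;> ring

lemma linearIndependent_consKerVec (c : K) : LinearIndependent K (consKerVec c) := by
  refine LinearIndependent.of_comp (LinearMap.funLeft K K consRoot) ?_
  convert (Pi.basisFun K (Fin 11)).linearIndependent using 1
  funext k l
  obtain ⟨hcomp, hdepth⟩ := consComponent_consRoot l
  simp only [Function.comp_apply, LinearMap.funLeft_apply, consKerVec, hcomp, hdepth,
    pow_zero, Pi.basisFun_apply, Pi.single_apply]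

theorem rank_consMatrix_zero_one_le (c : K) : (consMatrix K 0 1 c 0).rank ≤ 31 := by
  have := rank_add_card_le_of_mulVec_eq_zero _ (linearIndependent_consKerVec c)
    (consMatrix_zero_one_mulVec_consKerVec c)
  simp only [Fintype.card_fin] at this
  omega

def consRowSel : Fin 31 → Fin 42 :=
  ![5,36,0,11,17,29,1,35,2,3,4,38,37,6,12,7,13,24,8,9,10,16,28,41,26,20,30,15,27,33,34]

def consColSel : Fin 31 → Fin 42 :=
  ![1,2,4,6,3,7,8,10,11,14,15,18,22,16,5,23,24,17,25,26,27,21,31,33,34,29,19,20,30,37,38]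

lemma consColSel_ne_of_lt : ∀ i j : Fin 31, j < i →
    consColSel j ≠ colQFin (consRowSel i) ∧ consColSel j ≠ colRFin (consRowSel i) := by
  decide

lemma consColSel_xor : ∀ i : Fin 31,
    Xor (consColSel i = colQFin (consRowSel i)) (consColSel i = colRFin (consRowSel i)) := by
  decide

theorem le_rank_consMatrix_zero_one {c : K} (hc : c ≠ 0) :
    31 ≤ (consMatrix K 0 1 c 0).rank := by
  refine le_rank_of_isUpperTriangular_submatrix _ consRowSel consColSel (fun i j hji => ?_)
    (fun i => ?_)
  · obtain ⟨hq, hr⟩ := consColSel_ne_of_lt i j hji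
    rw [submatrix_apply, consMatrix_zero_one_apply, if_neg hq, if_neg hr, mul_zero, add_zero]
  · rcases consColSel_xor i with ⟨hq, hr⟩ | ⟨hr, hq⟩
    · rw [consMatrix_zero_one_apply, if_pos hq, if_neg hr, mul_zero, add_zero]
      exact one_ne_zero
    · rw [consMatrix_zero_one_apply, if_neg hq, if_pos hr, mul_one, zero_add]
      exact hc

theorem rank_consMatrix_zero_one_of_ne_zero {c : K} (hc : c ≠ 0) :
    (consMatrix K 0 1 c 0).rank = 31 :=
  le_antisymm (rank_consMatrix_zero_one_le c) (le_rank_consMatrix_zero_one hc)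

end ConsMatrix

/-- For the one-parameter family `(0,1,c,0)`: over the rational function field `ℚ(t)`
the matrix of consequences `M(0,1,t,0)` has rank exactly 31, and over `ℚ` the matrix
`M(0,1,0,0)` has rank exactly 26. -/
theorem stmt_7 :
    (consMatrix (RatFunc ℚ) 0 1 RatFunc.X 0).rank = 31 ∧
    (consMatrix ℚ 0 1 0 0).rank = 26 :=
  ⟨rank_consMatrix_zero_one_of_ne_zero RatFunc.X_ne_zero, rank_consMatrix_zero_one_zero⟩
end

section
/- Fix an integer n ≥ 2, a set A, and a map p : Aⁿ → A satisfying the n-ary associativity identities: for all 0 ≤ i < j ≤ n−1 and all a_1, …, a_{2n−1} ∈ A, p(a_1, …, a_i, p(a_{i+1}, …, a_{i+n}), a_{i+n+1}, …, a_{2n−1}) = p(a_1, …, a_j, p(a_{j+1}, …, a_{j+n}), a_{j+n+1}, …, a_{2n−1}). Then the value of any monomial is independent of the placement of the operation symbols: for any two planar n-ary trees T and T′ with the same number of leaves d, and for any list a of d elements of A, eval(T, a) = eval(T′, a). -/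
/-- A planar `n`-ary tree: either a leaf, or a node with `n` (ordered) children. -/
inductive NTree (n : ℕ) : Type
  | leaf : NTree n
  | node : (Fin n → NTree n) → NTree n

/-- The number of leaves of a planar `n`-ary tree. -/
def NTree.leaves {n : ℕ} : NTree n → ℕ
  | .leaf => 1
  | .node t => ∑ i, (t i).leaves

/-- Evaluation of a planar `n`-ary tree `T` on the list of inputs
`a off, a (off+1), …, a (off + leaves T - 1)`: a leaf returns the single input, and a
node applies `p` to the evaluations of its children on the consecutive left-to-right
blocks of inputs (child `i` starts at `off` plus the leaves of the earlier children). -/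
def NTree.evalFrom {n : ℕ} {A : Type*} (p : (Fin n → A) → A) :
    NTree n → ℕ → (ℕ → A) → A
  | .leaf, off, a => a off
  | .node t, off, a =>
      p fun i => (t i).evalFrom p (off + ∑ j : Fin n, if j < i then (t j).leaves else 0) a

/-!
Every tree is evaluation-equivalent to the left comb with the same number of leaves. It suffices
to treat a node whose children are left combs, with `s i` internal nodes in child `i`. If some
child `j + 1 > 0` is not a leaf, expand its root: associativity moves that inner operation one
slot to the left, where it now takes child `j` and the rest of child `j + 1` as its first two
inputs and, by induction, becomes a left comb with `s j + s (j + 1)` internal nodes. This strictly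
decreases `∑ i, i * s i`, so the process ends when all children but the first are leaves, and
that tree is itself a left comb.
-/

open Finset

/-- The partial composition `p ∘ᵢ p` applied to `a 0, …, a (2n - 2)`: the inner `p` consumes
the inputs `a i, …, a (i + n - 1)`. -/
def partialComp {n : ℕ} {A : Type*} (p : (Fin n → A) → A) (i : ℕ) (a : ℕ → A) : A :=
  p fun k => if (k : ℕ) < i then a k
    else if (k : ℕ) = i then p (fun l => a (i + (l : ℕ)))
    else a ((k : ℕ) + n - 1)

def IsNAryAssoc {n : ℕ} {A : Type*} (p : (Fin n → A) → A) : Prop :=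
  ∀ i j : Fin n, i < j → ∀ a : ℕ → A, partialComp p i a = partialComp p j a

namespace NTree

variable {n : ℕ} {A : Type*}

def ofSeq (s : ℕ → NTree n) : NTree n := node fun i => s i

lemma ofSeq_congr {s s' : ℕ → NTree n} (h : ∀ i < n, s i = s' i) : ofSeq s = ofSeq s' :=
  congrArg node (funext fun i => h i i.isLt)

def leavesBefore (s : ℕ → NTree n) (m : ℕ) : ℕ := ∑ j ∈ range m, (s j).leaves

lemma leavesBefore_succ (s : ℕ → NTree n) (m : ℕ) :
    leavesBefore s (m + 1) = leavesBefore s m + (s m).leaves :=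
  sum_range_succ _ m

lemma leavesBefore_add (s : ℕ → NTree n) (i m : ℕ) :
    leavesBefore s (i + m) = leavesBefore s i + leavesBefore (fun l => s (i + l)) m :=
  sum_range_add _ i m

lemma leaves_ofSeq (s : ℕ → NTree n) : (ofSeq s).leaves = leavesBefore s n :=
  Fin.sum_univ_eq_sum_range (fun j => (s j).leaves) n

lemma evalFrom_ofSeq (p : (Fin n → A) → A) (s : ℕ → NTree n) (off : ℕ) (a : ℕ → A) :
    (ofSeq s).evalFrom p off a = p fun i => (s i).evalFrom p (off + leavesBefore s i) a := by
  simp only [ofSeq, evalFrom]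
  congr! 4 with i
  simp only [Fin.lt_def]
  rw [Fin.sum_univ_eq_sum_range (fun j => if j < (i : ℕ) then (s j).leaves else 0) n,
    ← sum_filter, leavesBefore]
  congr 1
  ext j
  simp only [mem_filter, mem_range]
  omega

def graftSeq (s : ℕ → NTree n) (i : ℕ) : ℕ → NTree n := fun k =>
  if k < i then s k else if k = i then ofSeq (fun l => s (i + l)) else s (k + n - 1)

/-- The tree `node(s 0, …, s (i-1), node(s i, …, s (i+n-1)), s (i+n), …, s (2n-2))`. -/
def graft (s : ℕ → NTree n) (i : ℕ) : NTree n := ofSeq (graftSeq s i)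

lemma leavesBefore_graftSeq (s : ℕ → NTree n) (i k : ℕ) :
    leavesBefore (graftSeq s i) k = leavesBefore s (if k ≤ i then k else k + n - 1) := by
  induction k with
  | zero => simp [leavesBefore]
  | succ k ih =>
    rw [leavesBefore_succ, ih]
    rcases lt_trichotomy k i with h | rfl | h
    · simp [graftSeq, h, h.le, Nat.succ_le_of_lt h, leavesBefore_succ]
    · simp [graftSeq, leaves_ofSeq, ← leavesBefore_add]
    · rw [if_neg h.not_ge, if_neg (by omega), show k + 1 + n - 1 = k + n - 1 + 1 by omega,
        leavesBefore_succ]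
      simp [graftSeq, h.not_gt, h.ne']

lemma leaves_graft (s : ℕ → NTree n) {i : ℕ} (hi : i < n) :
    (graft s i).leaves = leavesBefore s (n + n - 1) := by
  rw [graft, leaves_ofSeq, leavesBefore_graftSeq, if_neg hi.not_ge]

lemma evalFrom_graft (p : (Fin n → A) → A) (s : ℕ → NTree n) (i off : ℕ) (a : ℕ → A) :
    (graft s i).evalFrom p off a =
      partialComp p i fun m => (s m).evalFrom p (off + leavesBefore s m) a := by
  rw [graft, evalFrom_ofSeq, partialComp]
  congr 1
  funext k
  rw [leavesBefore_graftSeq]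
  rcases lt_trichotomy (k : ℕ) i with h | h | h
  · simp [graftSeq, h, h.le]
  · simp only [graftSeq, h, lt_irrefl, if_false, if_true, le_refl, evalFrom_ofSeq,
      add_assoc, ← leavesBefore_add]
  · simp [graftSeq, h.not_gt, h.ne', h.not_ge]

def EvalEquiv (p : (Fin n → A) → A) (T T' : NTree n) : Prop :=
  T.leaves = T'.leaves ∧ ∀ off a, T.evalFrom p off a = T'.evalFrom p off a

namespace EvalEquiv

variable {p : (Fin n → A) → A} {T T' T'' : NTree n}

@[refl] lemma refl (p : (Fin n → A) → A) (T : NTree n) : EvalEquiv p T T :=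
  ⟨rfl, fun _ _ => rfl⟩

lemma of_eq (h : T = T') : EvalEquiv p T T' := h ▸ refl p T

@[symm] lemma symm (h : EvalEquiv p T T') : EvalEquiv p T' T :=
  ⟨h.1.symm, fun off a => (h.2 off a).symm⟩

@[trans] lemma trans (h : EvalEquiv p T T') (h' : EvalEquiv p T' T'') : EvalEquiv p T T'' :=
  ⟨h.1.trans h'.1, fun off a => (h.2 off a).trans (h'.2 off a)⟩

instance : Trans (EvalEquiv p) (EvalEquiv p) (EvalEquiv p) := ⟨trans⟩

end EvalEquiv

lemma evalEquiv_node {p : (Fin n → A) → A} {t t' : Fin n → NTree n}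
    (h : ∀ i, EvalEquiv p (t i) (t' i)) : EvalEquiv p (node t) (node t') := by
  have hleaves : ∀ i, (t i).leaves = (t' i).leaves := fun i => (h i).1
  refine ⟨by simp only [leaves, hleaves], fun off a => ?_⟩
  simp only [evalFrom, hleaves, (h _).2]

lemma evalEquiv_ofSeq {p : (Fin n → A) → A} {s s' : ℕ → NTree n}
    (h : ∀ i < n, EvalEquiv p (s i) (s' i)) : EvalEquiv p (ofSeq s) (ofSeq s') :=
  evalEquiv_node fun i => h i i.isLt

lemma evalEquiv_graft {p : (Fin n → A) → A} (hp : IsNAryAssoc p) (s : ℕ → NTree n) {i j : ℕ}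
    (hij : i < j) (hj : j < n) : EvalEquiv p (graft s i) (graft s j) := by
  refine ⟨by rw [leaves_graft s (hij.trans hj), leaves_graft s hj], fun off a => ?_⟩
  rw [evalFrom_graft, evalFrom_graft]
  exact hp ⟨i, hij.trans hj⟩ ⟨j, hj⟩ hij _

def leftComb : ℕ → NTree n
  | 0 => leaf
  | k + 1 => ofSeq fun i => if i = 0 then leftComb k else leaf

lemma leaves_leftComb (hn : n ≠ 0) (k : ℕ) :
    (leftComb k : NTree n).leaves = k * (n - 1) + 1 := by
  obtain ⟨m, rfl⟩ := Nat.exists_eq_succ_of_ne_zero hn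
  induction k with
  | zero => simp [leftComb, leaves]
  | succ k ih =>
    rw [leftComb, leaves_ofSeq, leavesBefore, sum_range_succ']
    simp [ih, leaves]
    ring

lemma ofSeq_leftComb_of_eq_zero {s : ℕ → ℕ} (hs : ∀ i, 0 < i → i < n → s i = 0) :
    (ofSeq fun i => leftComb (s i) : NTree n) = leftComb (s 0 + 1) := by
  rw [leftComb]
  refine ofSeq_congr fun i hi => ?_
  rcases Nat.eq_zero_or_pos i with h | h
  · simp [h]
  · simp [hs i h hi, h.ne', leftComb]

def mergeAt (s : ℕ → ℕ) (j : ℕ) : ℕ → ℕ := fun k =>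
  if k = j then s j + s (j + 1) else if k = j + 1 then 0 else s k

lemma sum_range_mul_mergeAt (w s : ℕ → ℕ) {N j : ℕ} (hj : j + 1 < N) :
    ∑ k ∈ range N, w k * mergeAt s j k + w (j + 1) * s (j + 1) =
      ∑ k ∈ range N, w k * s k + w j * s (j + 1) := by
  have h : ∀ k, mergeAt s j k + (if k = j + 1 then s (j + 1) else 0) =
      s k + (if k = j then s (j + 1) else 0) := by
    intro k
    simp only [mergeAt]
    split_ifs <;> subst_vars <;> omega
  have := sum_congr rfl fun k (_ : k ∈ range N) => congrArg (w k * ·) (h k)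
  simpa [mul_add, sum_add_distrib, hj, Nat.lt_of_succ_lt hj] using this

def pairSeq (a b : ℕ) : ℕ → ℕ := fun l => if l = 0 then a else if l = 1 then b else 0

lemma sum_range_pairSeq (a b : ℕ) {N : ℕ} (hN : 2 ≤ N) :
    ∑ l ∈ range N, pairSeq a b l = a + b := by
  obtain ⟨m, rfl⟩ : ∃ m, N = m + 2 := ⟨N - 2, by omega⟩
  simp [sum_range_succ', pairSeq, add_comm]

lemma sum_range_mul_pairSeq (a b : ℕ) {N : ℕ} (hN : 2 ≤ N) :
    ∑ l ∈ range N, l * pairSeq a b l = b := by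
  rw [sum_eq_single_of_mem 1 (by simp; omega) fun l _ hl => by
    simp only [pairSeq]; split_ifs <;> simp_all]
  simp [pairSeq]

/-- The `2n - 1` trees left when the root of child `j + 1 = leftComb (r + 1)` of
`ofSeq fun i => leftComb (s i)` is flattened into its parent. -/
def rotationSeq (s : ℕ → ℕ) (j r : ℕ) : ℕ → NTree n := fun m =>
  if m ≤ j then leftComb (s m) else if m = j + 1 then leftComb r
  else if m ≤ j + n then leaf else leftComb (s (m + 1 - n))

lemma ofSeq_leftComb_eq_graft {s : ℕ → ℕ} {j r : ℕ} (hj : j + 1 < n) (hr : s (j + 1) = r + 1) :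
    (ofSeq fun i => leftComb (s i) : NTree n) = graft (rotationSeq s j r) (j + 1) := by
  refine ofSeq_congr fun k hk => ?_
  rcases lt_trichotomy k (j + 1) with h | rfl | h
  · simp [graftSeq, rotationSeq, h, Nat.le_of_lt_succ h]
  · simp only [graftSeq, rotationSeq, hr, lt_irrefl, if_false, if_true, leftComb]
    refine ofSeq_congr fun l hl => ?_
    rcases Nat.eq_zero_or_pos l with rfl | hl0
    · simp
    · rw [if_neg hl0.ne', if_neg (by omega), if_neg (by omega), if_pos (by omega)]
  · simp only [graftSeq, rotationSeq, if_neg h.not_gt, if_neg h.ne']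
    rw [if_neg (by omega), if_neg (by omega), if_neg (by omega),
      show k + n - 1 + 1 - n = k by omega]

lemma ofSeq_rotationSeq_eq (s : ℕ → ℕ) {j r : ℕ} :
    (ofSeq fun l => rotationSeq s j r (j + l) : NTree n) =
      ofSeq fun l => leftComb (pairSeq (s j) r l) := by
  refine ofSeq_congr fun l hl => ?_
  rcases l with _ | _ | l
  · simp [rotationSeq, pairSeq]
  · simp [rotationSeq, pairSeq]
  · simp only [rotationSeq, pairSeq]
    rw [if_neg (by omega), if_neg (by omega), if_pos (by omega), if_neg (by omega),
      if_neg (by omega)]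
    rfl

lemma evalEquiv_graft_rotationSeq {p : (Fin n → A) → A} {s : ℕ → ℕ} {j r : ℕ}
    (hj : j + 1 < n) (hr : s (j + 1) = r + 1)
    (hinner : EvalEquiv p (ofSeq fun l => leftComb (pairSeq (s j) r l))
      (leftComb (s j + (r + 1)))) :
    EvalEquiv p (graft (rotationSeq s j r) j) (ofSeq fun k => leftComb (mergeAt s j k)) := by
  refine evalEquiv_ofSeq fun k hk => ?_
  rcases lt_trichotomy k j with h | rfl | h
  · exact .of_eq (by simp [graftSeq, rotationSeq, mergeAt, h, h.le, h.ne,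
      show k ≠ j + 1 by omega])
  · simpa [graftSeq, mergeAt, hr, ofSeq_rotationSeq_eq] using hinner
  · refine .of_eq ?_
    simp only [graftSeq, rotationSeq, mergeAt, if_neg h.not_gt, if_neg h.ne']
    rw [if_neg (by omega), if_neg (by omega)]
    rcases (Nat.succ_le_of_lt h).eq_or_lt with rfl | h'
    · simp [leftComb]
    · rw [if_neg (by omega), if_neg h'.ne', show k + n - 1 + 1 - n = k by omega]

lemma evalEquiv_ofSeq_leftComb_mergeAt {p : (Fin n → A) → A} (hp : IsNAryAssoc p)
    {s : ℕ → ℕ} {j r : ℕ} (hj : j + 1 < n) (hr : s (j + 1) = r + 1)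
    (hinner : EvalEquiv p (ofSeq fun l => leftComb (pairSeq (s j) r l))
      (leftComb (s j + (r + 1)))) :
    EvalEquiv p (ofSeq fun i => leftComb (s i)) (ofSeq fun k => leftComb (mergeAt s j k)) :=
  calc (ofSeq fun i => leftComb (s i)) = graft (rotationSeq s j r) (j + 1) :=
        ofSeq_leftComb_eq_graft hj hr
    EvalEquiv p _ (graft (rotationSeq s j r) j) :=
        (evalEquiv_graft hp _ (lt_add_one j) hj).symm
    EvalEquiv p _ _ := evalEquiv_graft_rotationSeq hj hr hinner

theorem evalEquiv_ofSeq_leftComb {p : (Fin n → A) → A} (hn : n ≠ 0) (hp : IsNAryAssoc p)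
    (s : ℕ → ℕ) :
    EvalEquiv p (ofSeq fun i => leftComb (s i)) (leftComb (∑ i ∈ range n, s i + 1)) := by
  induction hμ : ∑ i ∈ range n, i * s i using Nat.strong_induction_on generalizing s with
  | _ μ ih =>
  by_cases hs : ∀ i, 0 < i → i < n → s i = 0
  · rw [ofSeq_leftComb_of_eq_zero hs, sum_eq_single_of_mem 0 (by simp; omega)
      fun i hi h0 => hs i (by omega) (by simpa using hi)]
  push Not at hs
  obtain ⟨i, hi0, hin, hsi⟩ := hs
  obtain ⟨j, rfl⟩ : ∃ j, i = j + 1 := ⟨i - 1, by omega⟩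
  obtain ⟨r, hr⟩ : ∃ r, s (j + 1) = r + 1 := ⟨s (j + 1) - 1, by omega⟩
  have hinner : EvalEquiv p (ofSeq fun l => leftComb (pairSeq (s j) r l))
      (leftComb (s j + (r + 1))) := by
    have hchild : (j + 1) * s (j + 1) ≤ μ :=
      hμ ▸ single_le_sum (f := fun i => i * s i) (fun _ _ => Nat.zero_le _) (mem_range.2 hin)
    have hμ' : ∑ l ∈ range n, l * pairSeq (s j) r l < μ := by
      rw [sum_range_mul_pairSeq _ _ (by omega)]
      nlinarith
    simpa only [sum_range_pairSeq _ _ (show 2 ≤ n by omega), add_assoc] using ih _ hμ' _ rfl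
  have hweight := sum_range_mul_mergeAt id s hin
  have hsum := sum_range_mul_mergeAt 1 s hin
  simp only [id, Pi.one_apply, one_mul, add_one_mul] at hweight hsum
  calc EvalEquiv p _ (ofSeq fun k => leftComb (mergeAt s j k)) :=
        evalEquiv_ofSeq_leftComb_mergeAt hp hin hr hinner
    EvalEquiv p _ _ := ih _ (by omega) _ rfl
    _ = _ := by rw [Nat.add_right_cancel hsum]

theorem exists_evalEquiv_leftComb {p : (Fin n → A) → A} (hn : n ≠ 0) (hp : IsNAryAssoc p)
    (T : NTree n) : ∃ k, EvalEquiv p T (leftComb k) := by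
  induction T with
  | leaf => exact ⟨0, .refl p leaf⟩
  | node t ih =>
    choose k hk using ih
    let s : ℕ → ℕ := fun m => if h : m < n then k ⟨m, h⟩ else 0
    refine ⟨∑ i ∈ range n, s i + 1, ?_⟩
    calc EvalEquiv p (node t) (ofSeq fun i => leftComb (s i)) :=
          evalEquiv_node fun i => by simpa [s] using hk i
      EvalEquiv p _ _ := evalEquiv_ofSeq_leftComb hn hp s

theorem evalEquiv_of_leaves_eq {p : (Fin n → A) → A} (hn : 2 ≤ n) (hp : IsNAryAssoc p)
    {T T' : NTree n} (h : T.leaves = T'.leaves) : EvalEquiv p T T' := by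
  obtain ⟨k, hk⟩ := exists_evalEquiv_leftComb (by omega) hp T
  obtain ⟨k', hk'⟩ := exists_evalEquiv_leftComb (by omega) hp T'
  have hkk' : k = k' := by
    have := hk.1.symm.trans (h.trans hk'.1)
    rw [leaves_leftComb (by omega), leaves_leftComb (by omega)] at this
    exact Nat.eq_of_mul_eq_mul_right (by omega) (Nat.add_right_cancel this)
  exact hk.trans (hkk' ▸ hk'.symm)

end NTree

/-- If `p : Aⁿ → A` satisfies the `n`-ary associativity identities, then the value of
any monomial is independent of the placement of the operation symbols: any two planar
`n`-ary trees with the same number of leaves evaluate equally on any list of inputs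
(here `a : ℕ → A`, with `a 0, a 1, …` the entries of the list, read left to right). -/
theorem stmt_13 (n : ℕ) (hn : 2 ≤ n) (A : Type*) (p : (Fin n → A) → A)
    (hassoc : ∀ i j : Fin n, i < j → ∀ a : ℕ → A,
      p (fun k => if (k : ℕ) < (i : ℕ) then a k
          else if (k : ℕ) = (i : ℕ) then p (fun l => a ((i : ℕ) + (l : ℕ)))
          else a ((k : ℕ) + n - 1)) =
      p (fun k => if (k : ℕ) < (j : ℕ) then a k
          else if (k : ℕ) = (j : ℕ) then p (fun l => a ((j : ℕ) + (l : ℕ)))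
          else a ((k : ℕ) + n - 1)))
    (T T' : NTree n) (h : T.leaves = T'.leaves) (a : ℕ → A) :
    T.evalFrom p 0 a = T'.evalFrom p 0 a :=
  (NTree.evalEquiv_of_leaves_eq hn hassoc h).2 0 a
end
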